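/- arXiv:0710.1972 — 6 statements merged into one kernel-verified Lean document; each statement's English description precedes it below -/
import Mathlib

section
/- Let n ≥ 1, let w ∈ Sₙ be an involution, and let π, σ ∈ Sₙ. Then (−1)^{inv_w(πσ)} = (−1)^{inv_w(σ)} · (−1)^{inv_{σwσ⁻¹}(π)} (note that σwσ⁻¹ is again an involution). Equivalently, inv_w(πσ) ≡ inv_w(σ) + inv_{σwσ⁻¹}(π) (mod 2). -/
/-!
`(-1)^{inv_w π}` is the product, over the pairs `{i, w i}` with `i < w i`, of the sign
`ε_π(i, w i) = ±1` (`pairSign`) recording whether `π` keeps or inverts the pair. This sign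
is multiplicative along composition, `ε_{πσ}(i, j) = ε_σ(i, j) · ε_π(σ i, σ j)`, and the
pairs of `σ w σ⁻¹` are the images under `σ` of the pairs of `w`. Since `ε_π` does not depend
on the order of the pair, it does not matter which endpoint `σ` sends to the smaller value.
-/

open Equiv

/-- The set of involutions in `Sₙ` (elements `w` with `w² = id`). -/
abbrev SymInv (n : ℕ) : Type := {w : Equiv.Perm (Fin n) // w * w = 1}

/-- `inv_w(π) = |Inv(π) ∩ Pair(w)|`. -/
noncomputable def invw (n : ℕ) (w π : Equiv.Perm (Fin n)) : ℕ :=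
  {p : Fin n × Fin n | p.1 < p.2 ∧ w p.1 = p.2 ∧ π p.2 < π p.1}.ncard

open Finset Function

section PairSign

variable {α β γ : Type*} [LinearOrder α] [LinearOrder β] [LinearOrder γ]

def pairSign (f : α → β) (i j : α) : ℤ :=
  if (f i < f j ↔ i < j) then 1 else -1

theorem pairSign_comm {f : α → β} (hf : Injective f) (i j : α) :
    pairSign f j i = pairSign f i j := by
  rcases lt_trichotomy i j with h | rfl | h
  · rcases (hf.ne h.ne).lt_or_gt with h' | h' <;> simp [pairSign, h, h.not_gt, h', h'.not_gt]
  · rfl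
  · rcases (hf.ne h.ne').lt_or_gt with h' | h' <;> simp [pairSign, h, h.not_gt, h', h'.not_gt]

theorem pairSign_comp (f : β → γ) (g : α → β) (i j : α) :
    pairSign (f ∘ g) i j = pairSign g i j * pairSign f (g i) (g j) := by
  unfold pairSign
  by_cases hi : g i < g j <;> by_cases hf : f (g i) < f (g j) <;> by_cases hij : i < j <;>
    simp [hi, hf, hij]

theorem pairSign_of_lt {f : α → β} (hf : Injective f) {i j : α} (h : i < j) :
    pairSign f i j = if f j < f i then -1 else 1 := by
  rcases (hf.ne h.ne).lt_or_gt with h' | h' <;> simp [pairSign, h, h', h'.not_gt]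

end PairSign

section Orientation

variable {α β γ M : Type*} [LinearOrder β] [LinearOrder γ]

def pairMin (h : α → β) (w : α → α) (k : α) : α :=
  if h k < h (w k) then k else w k

variable {w : α → α}

theorem pairMin_lt (hw : Involutive w) {h : α → β} (hh : Injective h) {k : α} (hk : k ≠ w k) :
    h (pairMin h w k) < h (w (pairMin h w k)) := by
  unfold pairMin
  split_ifs with hlt
  · exact hlt
  · rw [hw k]
    exact (not_lt.1 hlt).lt_of_ne' (hh.ne hk)

theorem pairMin_pairMin (hw : Involutive w) (g : α → β) (h : α → γ) {k : α}
    (hk : g k < g (w k)) : pairMin g w (pairMin h w k) = k := by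
  by_cases hlt : h k < h (w k)
  · simp [pairMin, hlt, hk]
  · simp [pairMin, hlt, hw k, hk.not_gt]

theorem apply_pairMin {f : α → M} (hf : ∀ i, f (w i) = f i) (h : α → β) (k : α) :
    f (pairMin h w k) = f k := by
  unfold pairMin
  split_ifs
  exacts [rfl, hf k]

theorem prod_lt_involutive_congr [Fintype α] [CommMonoid M] (hw : Involutive w) {g : α → β}
    {h : α → γ} (hg : Injective g) (hh : Injective h) (f : α → M) (hf : ∀ i, f (w i) = f i) :
    ∏ i with g i < g (w i), f i = ∏ i with h i < h (w i), f i := by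
  refine prod_nbij' (pairMin h w) (pairMin g w) ?_ ?_ ?_ ?_ ?_ <;>
    simp only [mem_filter, mem_univ, true_and]
  · exact fun k hk => pairMin_lt hw hh (ne_of_apply_ne g hk.ne)
  · exact fun k hk => pairMin_lt hw hg (ne_of_apply_ne h hk.ne)
  · exact fun k hk => pairMin_pairMin hw g h hk
  · exact fun k hk => pairMin_pairMin hw h g hk
  · exact fun k _ => (apply_pairMin hf h k).symm

end Orientation

theorem invw_eq_card (n : ℕ) (w π : Perm (Fin n)) :
    invw n w π = #{i | i < w i ∧ π (w i) < π i} := by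
  rw [invw, ← Set.ncard_coe_finset, ← Set.ncard_image_of_injective _
    (f := fun i => (i, w i)) (fun i j h => congrArg Prod.fst h)]
  congr 1
  ext ⟨i, j⟩
  simp only [Set.mem_image, coe_filter, mem_univ, true_and, Set.mem_ofPred_eq, Prod.mk.injEq]
  constructor
  · rintro ⟨hij, rfl, hπ⟩
    exact ⟨i, ⟨hij, hπ⟩, rfl, rfl⟩
  · rintro ⟨k, hk, rfl, rfl⟩
    exact ⟨hk.1, rfl, hk.2⟩

theorem neg_one_pow_invw (n : ℕ) (w π : Perm (Fin n)) :
    (-1 : ℤ) ^ invw n w π = ∏ i with i < w i, pairSign π i (w i) := by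
  rw [invw_eq_card, ← filter_filter, ← prod_const, prod_filter]
  refine prod_congr rfl fun i hi => ?_
  rw [pairSign_of_lt π.injective (mem_filter.1 hi).2]


theorem sign_cocycle_general (n : ℕ) (w : Equiv.Perm (Fin n)) (hw : w * w = 1)
    (π σ : Equiv.Perm (Fin n)) :
    ((-1 : ℤ)) ^ invw n w (π * σ) =
      (-1 : ℤ) ^ invw n w σ * (-1 : ℤ) ^ invw n (σ * w * σ⁻¹) π := by
  have hw_inv : Involutive w := DFunLike.congr_fun hw
  have conj_pairs : (-1 : ℤ) ^ invw n (σ * w * σ⁻¹) π =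
      ∏ i with σ i < σ (w i), pairSign π (σ i) (σ (w i)) := by
    rw [neg_one_pow_invw, prod_filter, prod_filter, ← Equiv.prod_comp σ]
    simp [Perm.mul_apply]
  rw [neg_one_pow_invw, neg_one_pow_invw, conj_pairs,
    prod_lt_involutive_congr hw_inv σ.injective injective_id]
  · simp only [id, ← prod_mul_distrib]
    exact prod_congr rfl fun i _ => pairSign_comp π σ i (w i)
  · intro i
    rw [hw_inv i, pairSign_comm π.injective]

theorem sign_cocycle (n : ℕ) (hn : 1 ≤ n) (w : Equiv.Perm (Fin n)) (hw : w * w = 1)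
    (π σ : Equiv.Perm (Fin n)) :
    ((-1 : ℤ)) ^ invw n w (π * σ) =
      (-1 : ℤ) ^ invw n w σ * (-1 : ℤ) ^ invw n (σ * w * σ⁻¹) π :=
  sign_cocycle_general n w hw π σ
end

section
/- For every n ≥ 2, every q ∈ ℂ with q ≠ 0, and every 1 ≤ i < n, the operator T_i on V_{n,q} satisfies the quadratic relation (T_i − q·id)(T_i + id) = 0 in End_ℂ(V_{n,q}). -/
open Equiv

/-- `V_{n,q}`: the complex vector space with basis `{I_w : w an involution in Sₙ}`. -/
abbrev Vn (n : ℕ) : Type := SymInv n →₀ ℂ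

/-- Conjugation of an involution by a permutation: `π w π⁻¹`. -/
def conjInv (n : ℕ) (π : Equiv.Perm (Fin n)) (w : SymInv n) : SymInv n :=
  ⟨π * w.1 * π⁻¹, by
    have h : π * w.1 * π⁻¹ * (π * w.1 * π⁻¹) = π * (w.1 * w.1) * π⁻¹ := by group
    rw [h, w.2, mul_one, mul_inv_cancel]⟩

/-- The operator `T_i` on `V_{n,q}`.  Here indices are 0-based: the parameter `i`
(with `i + 1 < n`) corresponds to the pair of points `i, i+1` of `{0, …, n−1}`
(that is, to the 1-based index `i+1` of the paper), and `s_i` is the transposition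
swapping them.  On a basis vector `I_w` it acts by:
`q I_w` if `i, i+1 ∉ supp(w)`; `−I_w` if `i, i+1 ∈ supp(w)`;
`I_{s_i w s_i}` if `i ∈ supp(w)`, `i+1 ∉ supp(w)`;
`q I_{s_i w s_i} + (q−1) I_w` if `i ∉ supp(w)`, `i+1 ∈ supp(w)`. -/
noncomputable def TOp (n : ℕ) (q : ℂ) (i : ℕ) (hi : i + 1 < n) : Vn n →ₗ[ℂ] Vn n :=
  Finsupp.lift (Vn n) ℂ (SymInv n) (fun w =>
    letI a : Fin n := ⟨i, Nat.lt_of_succ_lt hi⟩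
    letI b : Fin n := ⟨i + 1, hi⟩
    letI s : Equiv.Perm (Fin n) := Equiv.swap a b
    if w.1 a = a then
      (if w.1 b = b then q • Finsupp.single w (1 : ℂ)
       else q • Finsupp.single (conjInv n s w) (1 : ℂ) + (q - 1) • Finsupp.single w (1 : ℂ))
    else
      (if w.1 b = b then Finsupp.single (conjInv n s w) (1 : ℂ)
       else - Finsupp.single w (1 : ℂ)))

lemma TOp_single (n : ℕ) (q : ℂ) (i : ℕ) (hi : i + 1 < n) (w : SymInv n) :
    TOp n q i hi (Finsupp.single w 1) =
      (letI a : Fin n := ⟨i, Nat.lt_of_succ_lt hi⟩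
       letI b : Fin n := ⟨i + 1, hi⟩
       letI s : Equiv.Perm (Fin n) := Equiv.swap a b
       if w.1 a = a then
         (if w.1 b = b then q • Finsupp.single w (1 : ℂ)
          else q • Finsupp.single (conjInv n s w) (1 : ℂ) + (q - 1) • Finsupp.single w (1 : ℂ))
       else
         (if w.1 b = b then Finsupp.single (conjInv n s w) (1 : ℂ)
          else - Finsupp.single w (1 : ℂ))) := by
  simp only [TOp, Finsupp.lift_apply]
  rw [Finsupp.sum_single_index (by rw [zero_smul])]
  rw [one_smul]

lemma conjInv_conjInv (n : ℕ) (s : Perm (Fin n)) (hs : s * s = 1) (w : SymInv n) :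
    conjInv n s (conjInv n s w) = w := by
  have hinv : s⁻¹ = s := by rw [inv_eq_iff_mul_eq_one, hs]
  apply Subtype.ext
  simp only [conjInv, hinv]
  calc s * (s * w.1 * s) * s = (s*s) * w.1 * (s*s) := by group
    _ = w.1 := by rw [hs]; group

/-- The operator `T_i` satisfies the quadratic relation `(T_i − q·id)(T_i + id) = 0`. -/
theorem TOp_quadratic (n : ℕ) (hn : 2 ≤ n) (q : ℂ) (hq : q ≠ 0) (i : ℕ) (hi : i + 1 < n) :
    (TOp n q i hi - q • (1 : Module.End ℂ (Vn n))) * (TOp n q i hi + 1) = 0 := by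
  set a : Fin n := ⟨i, Nat.lt_of_succ_lt hi⟩ with ha
  set b : Fin n := ⟨i + 1, hi⟩ with hb
  have hab : a ≠ b := by simp [ha, hb, Fin.ext_iff]
  set s : Perm (Fin n) := Equiv.swap a b with hs
  have hss : s * s = 1 := by
    rw [hs]; exact Equiv.swap_mul_self a b
  have hsinv : s⁻¹ = s := by rw [inv_eq_iff_mul_eq_one, hss]
  apply Finsupp.lhom_ext (fun w c => ?_)
  have hc : (Finsupp.single w c : Vn n) = c • Finsupp.single w (1:ℂ) := by
    rw [Finsupp.smul_single, smul_eq_mul, mul_one]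
  rw [hc, map_smul, map_smul]
  suffices h : ((TOp n q i hi - q • (1 : Module.End ℂ (Vn n))) * (TOp n q i hi + 1))
      (Finsupp.single w 1) = 0 by
    rw [h]; simp
  have hsa : s a = b := Equiv.swap_apply_left a b
  have hsb : s b = a := Equiv.swap_apply_right a b
  set w' : SymInv n := conjInv n s w with hw'
  have hw'a : w'.1 a = s (w.1 b) := by
    simp [hw', conjInv, hsinv, Equiv.Perm.mul_apply, hsa]
  have hw'b : w'.1 b = s (w.1 a) := by
    simp [hw', conjInv, hsinv, Equiv.Perm.mul_apply, hsb]
  have hcc : conjInv n s w' = w := conjInv_conjInv n s hss w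
  have hwinv : ∀ x, w.1 (w.1 x) = x := fun x => by
    have := congrArg (fun p => (p : Perm (Fin n)) x) w.2
    simpa [Equiv.Perm.mul_apply] using this
  simp only [Module.End.mul_apply, LinearMap.sub_apply, LinearMap.add_apply,
    LinearMap.smul_apply, Module.End.one_apply, map_add]
  have fold : ∀ u : SymInv n, TOp n q i hi (Finsupp.single u 1) =
      (if u.1 a = a then
         (if u.1 b = b then q • Finsupp.single u (1 : ℂ)
          else q • Finsupp.single (conjInv n s u) (1 : ℂ) + (q - 1) • Finsupp.single u (1 : ℂ))
       else
         (if u.1 b = b then Finsupp.single (conjInv n s u) (1 : ℂ)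
          else - Finsupp.single u (1 : ℂ))) := fun u => TOp_single n q i hi u
  by_cases h1 : w.1 a = a <;> by_cases h2 : w.1 b = b
  · have e1 : TOp n q i hi (Finsupp.single w 1) = q • Finsupp.single w (1:ℂ) := by
      rw [fold, if_pos h1, if_pos h2]
    rw [e1, map_smul, e1]
    module
  · -- h1 : w a = a, ¬h2 : w b ≠ b
    have h4a : w'.1 a ≠ a := by
      rw [hw'a]; intro h; apply h2
      apply s.injective; rw [h, hsb]
    have h4b : w'.1 b = b := by rw [hw'b, h1, hsa]
    have e1 : TOp n q i hi (Finsupp.single w 1)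
        = q • Finsupp.single w' (1:ℂ) + (q - 1) • Finsupp.single w (1:ℂ) := by
      rw [fold, if_pos h1, if_neg h2]
    have e2 : TOp n q i hi (Finsupp.single w' 1) = Finsupp.single w (1:ℂ) := by
      rw [fold, if_neg h4a, if_pos h4b, hcc]
    rw [e1, map_add, map_smul, map_smul, e1, e2]
    module
  · -- ¬h1 : w a ≠ a, h2 : w b = b
    have h3a : w'.1 a = a := by rw [hw'a, h2, hsb]
    have h3b : w'.1 b ≠ b := by
      rw [hw'b]; intro h; apply h1
      apply s.injective; rw [h, hsa]
    have e1 : TOp n q i hi (Finsupp.single w 1) = Finsupp.single w' (1:ℂ) := by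
      rw [fold, if_neg h1, if_pos h2]
    have e2 : TOp n q i hi (Finsupp.single w' 1)
        = q • Finsupp.single w (1:ℂ) + (q - 1) • Finsupp.single w' (1:ℂ) := by
      rw [fold, if_pos h3a, if_neg h3b, hcc]
    rw [e1, e2]
    module
  · have e1 : TOp n q i hi (Finsupp.single w 1) = - Finsupp.single w (1:ℂ) := by
      rw [fold, if_neg h1, if_neg h2]
    rw [e1, map_neg, e1]
    module
end

section
/- For every n ≥ 1, the assignment x · I_w = (−1)^{inv_w(x)} I_{x w x⁻¹} if dom(w) ⊆ dom(x), and x · I_w = 0 otherwise (for x ∈ ISₙ and w an involution in ISₙ), defines a monoid homomorphism from ISₙ to the multiplicative monoid of End_ℂ(V): the identity of ISₙ acts as the identity of V, and (xy) · I_w = x · (y · I_w) for all x, y ∈ ISₙ and all involutions w. -/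
open Equiv

/-- The symmetric inverse semigroup `ISₙ`: partial injective maps of `{0, …, n−1}`
(modelled as partial equivalences `Fin n ≃. Fin n`), under composition of partial
maps: `(x * y)(a) = x(y(a))`. -/
abbrev ISn (n : ℕ) : Type := PEquiv (Fin n) (Fin n)

noncomputable instance ISnMonoid (n : ℕ) : Monoid (ISn n) where
  one := PEquiv.refl (Fin n)
  mul x y := y.trans x
  mul_assoc x y z := (PEquiv.trans_assoc z y x).symm
  one_mul x := PEquiv.trans_refl x
  mul_one x := PEquiv.refl_trans x

@[simp] theorem ISn.mul_def {n : ℕ} (x y : ISn n) : x * y = y.trans x := rfl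
@[simp] theorem ISn.one_def {n : ℕ} : (1 : ISn n) = PEquiv.refl (Fin n) := rfl

/-- Involutions in `ISₙ`: elements mapping their domain bijectively to itself with
`w(w(a)) = a` for all `a` in the domain; equivalently, `w.symm = w`. -/
abbrev ISInv (n : ℕ) : Type := {w : ISn n // w.symm = w}

/-- `V`: the complex vector space with basis `{I_w : w an involution in ISₙ}`. -/
abbrev VIS (n : ℕ) : Type := ISInv n →₀ ℂ

/-- Conjugation `x w x⁻¹` of an involution `w ∈ ISₙ` by an element `x ∈ ISₙ`
(as a partial map, `a ↦ x(w(x⁻¹(a)))`; when `dom(w) ⊆ dom(x)` this is the involution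
with domain `x(dom(w))` sending `x(a) ↦ x(w(a))` for `a ∈ dom(w)`). -/
def conjIS {n : ℕ} (x : ISn n) (w : ISInv n) : ISInv n :=
  ⟨(x.symm.trans w.1).trans x, by
    rw [PEquiv.symm_trans_rev, PEquiv.symm_trans_rev, PEquiv.symm_symm, w.2,
      PEquiv.trans_assoc]⟩

/-- Conjugation `π w π⁻¹` of an involution `w ∈ ISₙ` by a permutation `π ∈ Sₙ`:
the involution with domain `π(dom(w))` sending `π(a) ↦ π(w(a))` for `a ∈ dom(w)`. -/
def conjPermIS {n : ℕ} (π : Equiv.Perm (Fin n)) (w : ISInv n) : ISInv n :=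
  conjIS π.toPEquiv w

/-- `inv_w(x) = |{(a,b) : a < b, w(a) = b, x(a) > x(b)}|`. -/
noncomputable def invIS {n : ℕ} (w : ISInv n) (x : ISn n) : ℕ :=
  {p : Fin n × Fin n | p.1 < p.2 ∧ w.1 p.1 = some p.2 ∧
    ∃ u v : Fin n, x p.1 = some u ∧ x p.2 = some v ∧ v < u}.ncard

/-- The endomorphism of `V` determined on basis vectors by
`x · I_w = (−1)^{inv_w(x)} I_{x w x⁻¹}` if `dom(w) ⊆ dom(x)`, and `x · I_w = 0`
otherwise. -/
noncomputable def rhoIS (n : ℕ) (x : ISn n) : VIS n →ₗ[ℂ] VIS n :=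
  Finsupp.lift (VIS n) ℂ (ISInv n) (fun w =>
    if ∀ a : Fin n, (w.1 a).isSome → (x a).isSome then
      ((-1 : ℂ) ^ invIS w x) • Finsupp.single (conjIS x w) (1 : ℂ)
    else 0)

/-!
The conjugation part is associativity of composition: `(xy) w (xy)⁻¹ = x (y w y⁻¹) x⁻¹`, and
`dom w ⊆ dom (xy)` exactly when `dom w ⊆ dom y` and `dom (y w y⁻¹) ⊆ dom x`. For the sign,
`(−1)^{inv_w(x)}` is a product over the 2-cycles `a < b` of `w` of `−1` when `x` reverses the
order of `a, b`. Transporting the 2-cycles of `w` by `y` (and re-sorting) is a bijection onto the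
2-cycles of `y w y⁻¹`, and whether `xy` reverses `a, b` is the parity of whether `y` reverses
`a, b` plus whether `x` reverses `y a, y b`; hence the sign is a cocycle.
-/

open Finset

variable {n : ℕ}

def DomSubset (w : ISInv n) (x : ISn n) : Prop :=
  ∀ a : Fin n, (w.1 a).isSome → (x a).isSome

instance (w : ISInv n) (x : ISn n) : Decidable (DomSubset w x) :=
  inferInstanceAs (Decidable (∀ a : Fin n, (w.1 a).isSome → (x a).isSome))

lemma ISInv.apply_eq_some_symm (w : ISInv n) {a b : Fin n} (h : w.1 a = some b) :
    w.1 b = some a := by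
  rw [← w.2]
  exact (PEquiv.eq_some_iff w.1).2 h

lemma conjIS_apply_eq_some_iff (y : ISn n) (w : ISInv n) {c d : Fin n} :
    (conjIS y w).1 c = some d ↔ ∃ a b, y a = some c ∧ w.1 a = some b ∧ y b = some d := by
  simp only [conjIS, PEquiv.trans_eq_some, PEquiv.eq_some_iff]
  constructor
  · rintro ⟨b, ⟨a, ha, hab⟩, hb⟩
    exact ⟨a, b, ha, hab, hb⟩
  · rintro ⟨a, b, ha, hab, hb⟩
    exact ⟨b, ⟨a, ha, hab⟩, hb⟩

lemma conjIS_apply_eq_some {y : ISn n} {w : ISInv n} {a b c d : Fin n} (hc : y a = some c)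
    (hw : w.1 a = some b) (hd : y b = some d) : (conjIS y w).1 c = some d :=
  (conjIS_apply_eq_some_iff y w).2 ⟨a, b, hc, hw, hd⟩

lemma conjIS_one (w : ISInv n) : conjIS 1 w = w :=
  Subtype.ext <| by simp [conjIS, PEquiv.symm_refl, PEquiv.refl_trans, PEquiv.trans_refl]

lemma conjIS_mul (x y : ISn n) (w : ISInv n) : conjIS (x * y) w = conjIS x (conjIS y w) :=
  Subtype.ext <| by simp only [conjIS, ISn.mul_def, PEquiv.symm_trans_rev, PEquiv.trans_assoc]

lemma exists_apply_eq_some_of_domSubset {w : ISInv n} {y : ISn n} (hy : DomSubset w y)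
    {a b : Fin n} (hw : w.1 a = some b) : ∃ c, y a = some c :=
  Option.isSome_iff_exists.1 (hy a (by simp [hw]))

lemma domSubset_conjIS_symm (y : ISn n) (w : ISInv n) : DomSubset (conjIS y w) y.symm := by
  intro c hc
  obtain ⟨d, hcd⟩ := Option.isSome_iff_exists.1 hc
  obtain ⟨a, -, hac, -, -⟩ := (conjIS_apply_eq_some_iff y w).1 hcd
  simp [(PEquiv.eq_some_iff y).2 hac]

lemma conjIS_symm_conjIS {y : ISn n} {w : ISInv n} (hy : DomSubset w y) :
    conjIS y.symm (conjIS y w) = w := by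
  refine Subtype.ext (PEquiv.ext fun a => Option.ext fun b => ?_)
  rw [conjIS_apply_eq_some_iff]
  simp only [PEquiv.eq_some_iff]
  constructor
  · rintro ⟨c, d, hc, hcd, hd⟩
    obtain ⟨a', b', hac, hab', hbd⟩ := (conjIS_apply_eq_some_iff y w).1 hcd
    rwa [y.inj hc hac, y.inj hd hbd]
  · intro hab
    obtain ⟨c, hc⟩ := exists_apply_eq_some_of_domSubset hy hab
    obtain ⟨d, hd⟩ := exists_apply_eq_some_of_domSubset hy (w.apply_eq_some_symm hab)
    exact ⟨c, d, hc, conjIS_apply_eq_some hc hab hd, hd⟩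

lemma domSubset_mul_iff (x y : ISn n) (w : ISInv n) :
    DomSubset w (x * y) ↔ DomSubset w y ∧ DomSubset (conjIS y w) x := by
  simp only [DomSubset, ISn.mul_def, Option.isSome_iff_exists, PEquiv.trans_eq_some]
  constructor
  · intro h
    refine ⟨fun a ha => ?_, fun c hc => ?_⟩
    · obtain ⟨_, b, hb, -⟩ := h a ha
      exact ⟨b, hb⟩
    · obtain ⟨d, hcd⟩ := hc
      obtain ⟨a, b, hac, hab, -⟩ := (conjIS_apply_eq_some_iff y w).1 hcd
      obtain ⟨u, c', hac', hu⟩ := h a ⟨b, hab⟩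
      exact ⟨u, Option.some_injective _ (hac.symm.trans hac') ▸ hu⟩
  · rintro ⟨hy, hx⟩ a ⟨b, hab⟩
    obtain ⟨c, hc⟩ := hy a ⟨b, hab⟩
    obtain ⟨d, hd⟩ := hy b ⟨a, w.apply_eq_some_symm hab⟩
    obtain ⟨u, hu⟩ := hx c ⟨d, conjIS_apply_eq_some hc hab hd⟩
    exact ⟨u, c, hc, hu⟩

def twoCycles (w : ISInv n) : Finset (Fin n × Fin n) :=
  {p | p.1 < p.2 ∧ w.1 p.1 = some p.2}

lemma mem_twoCycles {w : ISInv n} {p : Fin n × Fin n} :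
    p ∈ twoCycles w ↔ p.1 < p.2 ∧ w.1 p.1 = some p.2 := by
  simp [twoCycles]

def Flips (x : ISn n) (p : Fin n × Fin n) : Prop :=
  ∃ u v : Fin n, x p.1 = some u ∧ x p.2 = some v ∧ v < u

instance (x : ISn n) : DecidablePred (Flips x) := fun p => by
  unfold Flips; infer_instance

lemma flips_iff {x : ISn n} {a b u v : Fin n} (hu : x a = some u) (hv : x b = some v) :
    Flips x (a, b) ↔ v < u := by
  simp [Flips, hu, hv]

lemma neg_one_pow_invIS {R : Type*} [CommRing R] (w : ISInv n) (x : ISn n) :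
    (-1 : R) ^ invIS w x = ∏ p ∈ twoCycles w, if Flips x p then -1 else 1 := by
  have hset : {p : Fin n × Fin n | p.1 < p.2 ∧ w.1 p.1 = some p.2 ∧
      ∃ u v : Fin n, x p.1 = some u ∧ x p.2 = some v ∧ v < u}
      = ↑({p ∈ twoCycles w | Flips x p}) := by
    ext p
    simp [twoCycles, Flips, and_assoc]
  rw [invIS, hset, Set.ncard_coe_finset, prod_ite, prod_const, prod_const, one_pow,
    mul_one]

/-- The image of a pair under `y`, sorted. The `getD` defaults only matter off `dom y`, never on
the 2-cycles this is applied to. -/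
def pairMap (y : ISn n) (p : Fin n × Fin n) : Fin n × Fin n :=
  (min ((y p.1).getD p.1) ((y p.2).getD p.2), max ((y p.1).getD p.1) ((y p.2).getD p.2))

lemma pairMap_of_apply {y : ISn n} {a b c d : Fin n} (hc : y a = some c) (hd : y b = some d) :
    pairMap y (a, b) = (min c d, max c d) := by
  simp [pairMap, hc, hd]

lemma pairMap_swap (y : ISn n) (p : Fin n × Fin n) : pairMap y p.swap = pairMap y p := by
  simp [pairMap, min_comm, max_comm]

lemma exists_of_mem_twoCycles {w : ISInv n} {y : ISn n} (hy : DomSubset w y)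
    {p : Fin n × Fin n} (hp : p ∈ twoCycles w) :
    ∃ c d, y p.1 = some c ∧ y p.2 = some d ∧ c ≠ d ∧
      (conjIS y w).1 c = some d ∧ (conjIS y w).1 d = some c := by
  obtain ⟨hlt, hw⟩ := mem_twoCycles.1 hp
  have hw' := w.apply_eq_some_symm hw
  obtain ⟨c, hc⟩ := exists_apply_eq_some_of_domSubset hy hw
  obtain ⟨d, hd⟩ := exists_apply_eq_some_of_domSubset hy hw'
  refine ⟨c, d, hc, hd, ?_, conjIS_apply_eq_some hc hw hd, conjIS_apply_eq_some hd hw' hc⟩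
  rintro rfl
  exact hlt.ne (y.inj hc hd)

lemma pairMap_mem_twoCycles {w : ISInv n} {y : ISn n} (hy : DomSubset w y)
    {p : Fin n × Fin n} (hp : p ∈ twoCycles w) : pairMap y p ∈ twoCycles (conjIS y w) := by
  obtain ⟨c, d, hc, hd, hne, hcd, hdc⟩ := exists_of_mem_twoCycles hy hp
  rw [show p = (p.1, p.2) from rfl, pairMap_of_apply hc hd, mem_twoCycles]
  rcases hne.lt_or_gt with h | h
  · simpa [h.le] using And.intro h hcd
  · simpa [h.le] using And.intro h hdc

lemma pairMap_symm_pairMap {w : ISInv n} {y : ISn n} (hy : DomSubset w y)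
    {p : Fin n × Fin n} (hp : p ∈ twoCycles w) : pairMap y.symm (pairMap y p) = p := by
  obtain ⟨hlt, -⟩ := mem_twoCycles.1 hp
  obtain ⟨c, d, hc, hd, hne, -, -⟩ := exists_of_mem_twoCycles hy hp
  have hsorted : pairMap y.symm (c, d) = p := by
    rw [pairMap_of_apply ((PEquiv.eq_some_iff y).2 hc) ((PEquiv.eq_some_iff y).2 hd)]
    simp [hlt.le]
  rw [show p = (p.1, p.2) from rfl, pairMap_of_apply hc hd]
  rcases hne.lt_or_gt with h | h
  · simpa [h.le] using hsorted
  · simpa [h.le, ← pairMap_swap y.symm (c, d)] using hsorted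

lemma prod_twoCycles_pairMap {M : Type*} [CommMonoid M] {w : ISInv n} {y : ISn n}
    (hy : DomSubset w y) (f : Fin n × Fin n → M) :
    ∏ p ∈ twoCycles w, f (pairMap y p) = ∏ q ∈ twoCycles (conjIS y w), f q := by
  have hy' := domSubset_conjIS_symm y w
  refine prod_nbij' (pairMap y) (pairMap y.symm) (fun p => pairMap_mem_twoCycles hy)
    (fun q hq => ?_) (fun p => pairMap_symm_pairMap hy) (fun q => pairMap_symm_pairMap hy')
    fun _ _ => rfl
  simpa [conjIS_symm_conjIS hy] using pairMap_mem_twoCycles hy' hq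

lemma ite_neg_one_eq_mul {R : Type*} [CommRing R] (P Q : Prop) [Decidable P] [Decidable Q] :
    (if P then (-1 : R) else 1) = (if ¬Q then -1 else 1) * if (Q ↔ P) then -1 else 1 := by
  by_cases hP : P <;> by_cases hQ : Q <;> simp [hP, hQ]

lemma ite_flips_mul {R : Type*} [CommRing R] {x y : ISn n} {w : ISInv n} (hy : DomSubset w y)
    (hx : DomSubset (conjIS y w) x) {p : Fin n × Fin n} (hp : p ∈ twoCycles w) :
    (if Flips (x * y) p then (-1 : R) else 1) =
      (if Flips y p then -1 else 1) * if Flips x (pairMap y p) then -1 else 1 := by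
  obtain ⟨c, d, hc, hd, hne, hcd, hdc⟩ := exists_of_mem_twoCycles hy hp
  obtain ⟨u, hu⟩ := Option.isSome_iff_exists.1 (hx c (by simp [hcd]))
  obtain ⟨v, hv⟩ := Option.isSome_iff_exists.1 (hx d (by simp [hdc]))
  have hxy : Flips (x * y) p ↔ v < u := by simp [Flips, PEquiv.trans_eq_some, hc, hd, hu, hv]
  have hFy : Flips y p ↔ ¬c < d := by simp [Flips, hc, hd, hne.symm.le_iff_lt]
  have hFx : Flips x (pairMap y p) ↔ (c < d ↔ v < u) := by
    have huv : u ≠ v := fun h => hne (x.inj hu (h ▸ hv))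
    rw [show p = (p.1, p.2) from rfl, pairMap_of_apply hc hd]
    rcases hne.lt_or_gt with h | h
    · simpa [h, h.le] using flips_iff hu hv
    · simpa [h.le, h.not_gt, huv.le_iff_lt] using flips_iff hv hu
  rw [ite_neg_one_eq_mul _ (c < d)]
  simp only [hxy, hFy, hFx]

lemma neg_one_pow_invIS_mul {R : Type*} [CommRing R] {x y : ISn n} {w : ISInv n}
    (hy : DomSubset w y) (hx : DomSubset (conjIS y w) x) :
    (-1 : R) ^ invIS w (x * y) = (-1) ^ invIS w y * (-1) ^ invIS (conjIS y w) x := by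
  simp only [neg_one_pow_invIS]
  rw [← prod_twoCycles_pairMap hy, ← prod_mul_distrib]
  exact prod_congr rfl fun p hp => ite_flips_mul hy hx hp

lemma invIS_one (w : ISInv n) : invIS w 1 = 0 := by
  rw [invIS, Set.ncard_eq_zero]
  refine Set.eq_empty_of_forall_notMem fun p hp => ?_
  obtain ⟨hlt, -, u, v, hu, hv, hvu⟩ := hp
  simp only [ISn.one_def, PEquiv.refl_apply, Option.some.injEq] at hu hv
  exact hlt.not_gt (hu ▸ hv ▸ hvu)

lemma rhoIS_single_one (x : ISn n) (w : ISInv n) :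
    rhoIS n x (Finsupp.single w (1 : ℂ)) = if DomSubset w x then
      (-1 : ℂ) ^ invIS w x • Finsupp.single (conjIS x w) (1 : ℂ) else 0 := by
  rw [rhoIS, Finsupp.lift_apply, Finsupp.sum_single_index (by simp), one_smul]
  rfl

theorem rhoIS_isMonoidHom_general (n : ℕ) :
    rhoIS n 1 = LinearMap.id ∧
      ∀ (x y : ISn n) (w : ISInv n),
        rhoIS n (x * y) (Finsupp.single w (1 : ℂ)) =
          rhoIS n x (rhoIS n y (Finsupp.single w (1 : ℂ))) := by
  refine ⟨Finsupp.lhom_ext' fun w => LinearMap.ext_ring ?_, fun x y w => ?_⟩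
  · have hw : DomSubset w 1 := fun a _ => by simp
    rw [LinearMap.comp_apply, Finsupp.lsingle_apply, rhoIS_single_one, if_pos hw, invIS_one,
      conjIS_one, pow_zero, one_smul, LinearMap.comp_apply, LinearMap.id_apply,
      Finsupp.lsingle_apply]
  rw [rhoIS_single_one, rhoIS_single_one]
  by_cases hy : DomSubset w y
  · rw [if_pos hy, map_smul, rhoIS_single_one]
    by_cases hx : DomSubset (conjIS y w) x
    · rw [if_pos ((domSubset_mul_iff x y w).2 ⟨hy, hx⟩), if_pos hx, conjIS_mul,
        neg_one_pow_invIS_mul hy hx, mul_smul]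
    · rw [if_neg fun h => hx ((domSubset_mul_iff x y w).1 h).2, if_neg hx, smul_zero]
  · rw [if_neg fun h => hy ((domSubset_mul_iff x y w).1 h).1, if_neg hy, map_zero]

/-- The assignment `x ↦ ρ(x)` is a monoid homomorphism from `ISₙ` to the multiplicative
monoid of `End_ℂ(V)`: the identity of `ISₙ` acts as the identity of `V`, and
`(xy) · I_w = x · (y · I_w)` for all `x, y ∈ ISₙ` and all involutions `w`. -/
theorem rhoIS_isMonoidHom (n : ℕ) (hn : 1 ≤ n) :
    rhoIS n 1 = LinearMap.id ∧
      ∀ (x y : ISn n) (w : ISInv n),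
        rhoIS n (x * y) (Finsupp.single w (1 : ℂ)) =
          rhoIS n x (rhoIS n y (Finsupp.single w (1 : ℂ))) :=
  rhoIS_isMonoidHom_general n
end

section
/- Let n ≥ 2, q ∈ ℂ with q ≠ 0, let w be an involution in ISₙ, and let 1 ≤ i, j ≤ n − 1 with |j − i| > 1 be such that i, i+1 ∈ dom(w). Then C_{s_j}(T_i I_w) = T_i(C_{s_j} I_w) in V. -/
open Equiv

/-- The operator `T_i` on `V`.  Indices are 0-based: the parameter `i` (with
`i + 1 < n`) corresponds to the pair of points `i, i+1` of `{0, …, n−1}` (that is,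
to the 1-based index `i+1` of the paper), and `s_i` is the transposition swapping
them.  On a basis vector `I_w`:
if `i, i+1 ∈ dom(w)` then `T_i I_w` is `q I_w` if `i, i+1 ∉ supp(w)`; `−I_w` if
`i, i+1 ∈ supp(w)`; `I_{s_i w s_i}` if `i ∈ supp(w)`, `i+1 ∉ supp(w)`;
`q I_{s_i w s_i} + (q−1) I_w` if `i ∉ supp(w)`, `i+1 ∈ supp(w)`.
If `i, i+1 ∉ dom(w)` then `T_i I_w = q I_w`.  If `i ∈ dom(w)`, `i+1 ∉ dom(w)` then
`T_i I_w = I_{s_i w s_i}`.  If `i ∉ dom(w)`, `i+1 ∈ dom(w)` then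
`T_i I_w = q I_{s_i w s_i} + (q−1) I_w`. -/
noncomputable def TIS (n : ℕ) (q : ℂ) (i : ℕ) (hi : i + 1 < n) : VIS n →ₗ[ℂ] VIS n :=
  Finsupp.lift (VIS n) ℂ (ISInv n) (fun w =>
    letI a : Fin n := ⟨i, Nat.lt_of_succ_lt hi⟩
    letI b : Fin n := ⟨i + 1, hi⟩
    letI s : Equiv.Perm (Fin n) := Equiv.swap a b
    if (w.1 a).isSome then
      if (w.1 b).isSome then
        -- both `i` and `i+1` lie in `dom(w)`
        if w.1 a = some a then
          if w.1 b = some b then q • Finsupp.single w (1 : ℂ)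
          else q • Finsupp.single (conjPermIS s w) (1 : ℂ) +
            (q - 1) • Finsupp.single w (1 : ℂ)
        else
          if w.1 b = some b then Finsupp.single (conjPermIS s w) (1 : ℂ)
          else - Finsupp.single w (1 : ℂ)
      else Finsupp.single (conjPermIS s w) (1 : ℂ)
    else
      if (w.1 b).isSome then
        q • Finsupp.single (conjPermIS s w) (1 : ℂ) + (q - 1) • Finsupp.single w (1 : ℂ)
      else q • Finsupp.single w (1 : ℂ))

/-- The operator `P_i` on `V`.  Indices are 0-based: the parameter `i` (with `i < n`)
corresponds to the 1-based index `i+1` of the paper, so that the paper's condition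
`dom(w) ⊆ {i+1, …, n}` becomes: every `a ∈ dom(w)` satisfies `i < a`.
On a basis vector: `P_i I_w = I_w` if `dom(w) ⊆ {i+1, …, n}`, and `P_i I_w = 0`
otherwise. -/
noncomputable def PIS (n : ℕ) (i : ℕ) : VIS n →ₗ[ℂ] VIS n :=
  Finsupp.lift (VIS n) ℂ (ISInv n) (fun w =>
    if ∀ a : Fin n, (w.1 a).isSome → i < (a : ℕ) then Finsupp.single w (1 : ℂ) else 0)

/-- The linear map `C_π : V → V` with `C_π(I_w) = I_{π w π⁻¹}`. -/
noncomputable def CIS (n : ℕ) (π : Equiv.Perm (Fin n)) : VIS n →ₗ[ℂ] VIS n :=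
  Finsupp.lift (VIS n) ℂ (ISInv n) (fun w => Finsupp.single (conjPermIS π w) (1 : ℂ))

/-!
`T_i I_w` depends only on how `w` acts on `{i, i+1}` and on `s_i w s_i`. A permutation `π`
fixing `i` and `i+1` leaves the action on `{i, i+1}` unchanged under conjugation and commutes
with `s_i`, so `C_π` commutes with `T_i`; for `|j - i| > 1` the transposition `s_j` is such a `π`.
-/

section Commutation

variable {n : ℕ}

lemma conjPermIS_apply (π : Perm (Fin n)) (w : ISInv n) (a : Fin n) :
    (conjPermIS π w).1 a = (w.1 (π.symm a)).map π := by
  change ((π.toPEquiv.symm a).bind w.1).bind π.toPEquiv = _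
  rw [← Equiv.toPEquiv_symm, Equiv.toPEquiv_apply, Option.bind_some]
  cases w.1 (π.symm a) <;> simp [Equiv.toPEquiv_apply]

lemma conjPermIS_conjPermIS (π σ : Perm (Fin n)) (w : ISInv n) :
    conjPermIS π (conjPermIS σ w) = conjPermIS (π * σ) w := by
  apply Subtype.ext
  simp only [conjPermIS, conjIS, Perm.mul_def, toPEquiv_trans, PEquiv.symm_trans_rev,
    PEquiv.trans_assoc]

section FixedPoint

variable {π : Perm (Fin n)} {a : Fin n}

lemma conjPermIS_apply_of_apply_eq (ha : π a = a) (w : ISInv n) :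
    (conjPermIS π w).1 a = (w.1 a).map π := by
  rw [conjPermIS_apply, π.symm_apply_eq.mpr ha.symm]

lemma isSome_conjPermIS_apply_of_apply_eq (ha : π a = a) (w : ISInv n) :
    ((conjPermIS π w).1 a).isSome = (w.1 a).isSome := by
  rw [conjPermIS_apply_of_apply_eq ha, Option.isSome_map]

lemma conjPermIS_apply_eq_some_self_iff (ha : π a = a) (w : ISInv n) :
    (conjPermIS π w).1 a = some a ↔ w.1 a = some a := by
  rw [conjPermIS_apply_of_apply_eq ha]
  refine Iff.trans ?_ (Option.map_injective π.injective).eq_iff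
  rw [Option.map_some, ha]

end FixedPoint

lemma CIS_single (π : Perm (Fin n)) (w : ISInv n) (r : ℂ) :
    CIS n π (Finsupp.single w r) = Finsupp.single (conjPermIS π w) r := by
  simp [CIS]

theorem commute_CIS_TIS (q : ℂ) (i : ℕ) (hi : i + 1 < n) (π : Perm (Fin n))
    (ha : π ⟨i, by omega⟩ = ⟨i, by omega⟩) (hb : π ⟨i + 1, hi⟩ = ⟨i + 1, hi⟩) :
    Commute (CIS n π) (TIS n q i hi) := by
  refine Finsupp.lhom_ext' fun w => LinearMap.ext_ring ?_
  have hconj : conjPermIS π (conjPermIS (swap ⟨i, by omega⟩ ⟨i + 1, hi⟩) w) =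
      conjPermIS (swap ⟨i, by omega⟩ ⟨i + 1, hi⟩) (conjPermIS π w) := by
    rw [conjPermIS_conjPermIS, conjPermIS_conjPermIS, mul_swap_eq_swap_mul, ha, hb]
  simp only [LinearMap.comp_apply, Module.End.mul_apply, Finsupp.lsingle_apply, CIS_single]
  simp only [TIS, Finsupp.lift_apply, Finsupp.sum_single_index, zero_smul, one_smul,
    isSome_conjPermIS_apply_of_apply_eq ha, isSome_conjPermIS_apply_of_apply_eq hb,
    conjPermIS_apply_eq_some_self_iff ha, conjPermIS_apply_eq_some_self_iff hb]
  split_ifs <;> simp [CIS_single, hconj]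

end Commutation

/-- If `i, i+1 ∈ dom(w)` and `|j − i| > 1` (0-based indices `i, j` with `i + 1 < n`,
`j + 1 < n`, corresponding to the paper's 1-based `1 ≤ i, j ≤ n − 1`), then
`C_{s_j}(T_i I_w) = T_i(C_{s_j} I_w)`, where `s_j` is the transposition `(j, j+1)`. -/
theorem CIS_swap_TIS_comm (n : ℕ) (q : ℂ) (i j : ℕ)
    (hi : i + 1 < n) (hj : j + 1 < n) (hij : i + 1 < j ∨ j + 1 < i)
    (w : ISInv n) :
    CIS n (Equiv.swap ⟨j, by omega⟩ ⟨j + 1, hj⟩) (TIS n q i hi (Finsupp.single w (1 : ℂ))) =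
      TIS n q i hi (CIS n (Equiv.swap ⟨j, by omega⟩ ⟨j + 1, hj⟩)
        (Finsupp.single w (1 : ℂ))) := by
  have hcomm := commute_CIS_TIS q i hi (Equiv.swap ⟨j, by omega⟩ ⟨j + 1, hj⟩)
    (swap_apply_of_ne_of_ne (Fin.ne_of_val_ne (by dsimp only; omega)) (Fin.ne_of_val_ne (by dsimp only; omega)))
    (swap_apply_of_ne_of_ne (Fin.ne_of_val_ne (by dsimp only; omega)) (Fin.ne_of_val_ne (by dsimp only; omega)))
  exact LinearMap.congr_fun hcomm _
end

section
/- For every n ≥ 2, every q ∈ ℂ with q ≠ 0, and all indices 1 ≤ i < j ≤ n, the operators on V (the span of basis vectors indexed by involutions in ISₙ) satisfy T_i P_j = P_j T_i = q P_j in End_ℂ(V). -/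
open Equiv

/-! If `P_j I_w ≠ 0` then `dom(w)` avoids `i, i+1 ≤ j`, and there `T_i` acts by `q`.
Otherwise `T_i I_w` is a combination of `I_w` and `I_{s_i w s_i}`; since `s_i` permutes
`{i, i+1}`, both domains meet `{0, …, j}`, so `P_j` kills both. -/

open Finsupp

lemma conjPermIS_isSome {n : ℕ} (π : Equiv.Perm (Fin n)) (w : ISInv n) (x : Fin n) :
    ((conjPermIS π w).1 x).isSome = (w.1 (π.symm x)).isSome := by
  show (((π.toPEquiv.symm.trans w.1).trans π.toPEquiv) x).isSome = _
  show ((((π.toPEquiv.symm x).bind w.1)).bind π.toPEquiv).isSome = _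
  rw [← Equiv.toPEquiv_symm, Equiv.toPEquiv_apply, Option.bind_some]
  cases w.1 (π.symm x) <;> simp [Equiv.toPEquiv_apply]

section TIS

variable {n : ℕ} (q : ℂ) {i : ℕ} (hi : i + 1 < n) (w : ISInv n)

lemma TIS_single_of_eq_none (ha : w.1 ⟨i, Nat.lt_of_succ_lt hi⟩ = none)
    (hb : w.1 ⟨i + 1, hi⟩ = none) :
    TIS n q i hi (single w 1) = q • single w 1 := by
  simp only [TIS, lift_apply, sum_single_index, zero_smul, one_smul, ha, hb,
    Option.isSome_none, Bool.false_eq_true, if_false]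

lemma exists_TIS_single_eq
    (h : (w.1 ⟨i, Nat.lt_of_succ_lt hi⟩).isSome ∨ (w.1 ⟨i + 1, hi⟩).isSome) :
    ∃ α β : ℂ, TIS n q i hi (single w 1) =
      α • single (conjPermIS (swap ⟨i, Nat.lt_of_succ_lt hi⟩ ⟨i + 1, hi⟩) w) 1 +
        β • single w 1 := by
  simp only [TIS, lift_apply, sum_single_index, zero_smul, one_smul]
  split_ifs
  exacts [⟨0, q, by simp⟩, ⟨q, q - 1, rfl⟩, ⟨1, 0, by simp⟩, ⟨0, -1, by simp⟩,
    ⟨1, 0, by simp⟩, ⟨q, q - 1, rfl⟩, by simp_all]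

end TIS

section PIS

variable {n : ℕ} (j : ℕ) {w : ISInv n} (c : ℂ)

lemma PIS_single_of_forall_lt (h : ∀ a : Fin n, (w.1 a).isSome → j < (a : ℕ)) :
    PIS n j (single w c) = single w c := by
  simp only [PIS, lift_apply, sum_single_index, zero_smul, if_pos h, smul_single_one]

lemma apply_eq_none_of_forall_lt (h : ∀ a : Fin n, (w.1 a).isSome → j < (a : ℕ))
    {x : Fin n} (hxj : (x : ℕ) ≤ j) : w.1 x = none :=
  Option.not_isSome_iff_eq_none.mp fun hx => (h x hx).not_ge hxj

lemma PIS_single_of_isSome {x : Fin n} (hx : (w.1 x).isSome) (hxj : (x : ℕ) ≤ j) :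
    PIS n j (single w c) = 0 := by
  have h : ¬ ∀ a : Fin n, (w.1 a).isSome → j < (a : ℕ) := fun h => by
    simp [apply_eq_none_of_forall_lt j h hxj] at hx
  simp only [PIS, lift_apply, sum_single_index, if_neg h, smul_zero]

lemma PIS_single_conjPermIS_of_isSome (π : Equiv.Perm (Fin n)) {x : Fin n}
    (hx : (w.1 x).isSome) (hxj : (π x : ℕ) ≤ j) :
    PIS n j (single (conjPermIS π w) c) = 0 :=
  PIS_single_of_isSome j c (x := π x) (by rwa [conjPermIS_isSome, Equiv.symm_apply_apply]) hxj

end PIS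

section Commutation

variable {n : ℕ} (q : ℂ) {i j : ℕ} (hi : i + 1 < n)

lemma TIS_mul_PIS_of_lt (hij : i < j) :
    (TIS n q i hi : Module.End ℂ (VIS n)) * PIS n j = q • PIS n j := by
  refine lhom_ext' fun w => LinearMap.ext_ring ?_
  simp only [LinearMap.comp_apply, Module.End.mul_apply, LinearMap.smul_apply, lsingle_apply]
  by_cases hw : ∀ x : Fin n, (w.1 x).isSome → j < (x : ℕ)
  · rw [PIS_single_of_forall_lt j 1 hw, TIS_single_of_eq_none q hi w
      (apply_eq_none_of_forall_lt j hw (Nat.le_of_lt hij)) (apply_eq_none_of_forall_lt j hw hij)]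
  · push Not at hw
    obtain ⟨x, hx, hxj⟩ := hw
    rw [PIS_single_of_isSome j 1 hx hxj, map_zero, smul_zero]

lemma PIS_mul_TIS_of_lt (hij : i < j) :
    (PIS n j : Module.End ℂ (VIS n)) * TIS n q i hi = q • PIS n j := by
  set a : Fin n := ⟨i, Nat.lt_of_succ_lt hi⟩
  set b : Fin n := ⟨i + 1, hi⟩
  refine lhom_ext' fun w => LinearMap.ext_ring ?_
  simp only [LinearMap.comp_apply, Module.End.mul_apply, LinearMap.smul_apply, lsingle_apply]
  by_cases hab : w.1 a = none ∧ w.1 b = none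
  · rw [TIS_single_of_eq_none q hi w hab.1 hab.2, map_smul]
  have hdom : (w.1 a).isSome ∨ (w.1 b).isSome := by
    simpa only [Option.isSome_iff_ne_none, not_and_or] using hab
  obtain ⟨α, β, hT⟩ := exists_TIS_single_eq q hi w hdom
  obtain ⟨x, hx, hxj, hsxj⟩ : ∃ x, (w.1 x).isSome ∧ (x : ℕ) ≤ j ∧ (swap a b x : ℕ) ≤ j := by
    rcases hdom with h | h
    · exact ⟨a, h, Nat.le_of_lt hij, by rw [swap_apply_left]; exact hij⟩
    · exact ⟨b, h, hij, by rw [swap_apply_right]; exact Nat.le_of_lt hij⟩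
  rw [hT, map_add, map_smul, map_smul, PIS_single_of_isSome j 1 hx hxj,
    PIS_single_conjPermIS_of_isSome j 1 _ hx hsxj]
  simp

end Commutation

theorem TIS_PIS_high_general (n : ℕ) (q : ℂ) (i j : ℕ)
    (hi : i + 1 < n) (hij : i < j) :
    (TIS n q i hi : Module.End ℂ (VIS n)) * PIS n j = q • PIS n j ∧
      (PIS n j : Module.End ℂ (VIS n)) * TIS n q i hi = q • PIS n j :=
  ⟨TIS_mul_PIS_of_lt q hi hij, PIS_mul_TIS_of_lt q hi hij⟩

/-- `T_i P_j = P_j T_i = q P_j` for `i < j` (0-based indices: the paper's 1-based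
condition `1 ≤ i < j ≤ n` reads `i < j`, `i + 1 < n`, `j < n`). -/
theorem TIS_PIS_high (n : ℕ) (hn : 2 ≤ n) (q : ℂ) (hq : q ≠ 0) (i j : ℕ)
    (hi : i + 1 < n) (hj : j < n) (hij : i < j) :
    (TIS n q i hi : Module.End ℂ (VIS n)) * PIS n j = q • PIS n j ∧
      (PIS n j : Module.End ℂ (VIS n)) * TIS n q i hi = q • PIS n j :=
  TIS_PIS_high_general n q i j hi hij
end

section
/- For every n ≥ 2, every q ∈ ℂ with q ≠ 0, and all indices 1 ≤ j < i ≤ n − 1, the operators on V (the span of basis vectors indexed by involutions in ISₙ) satisfy T_i P_j = P_j T_i in End_ℂ(V). -/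
open Equiv

/-! `P_j` is the diagonal projection of `V` onto the span of the `I_w` with `dom(w)` above `j`,
and `T_i I_w` is a combination of `I_w` and `I_{s_i w s_i}`. For `j < i` the transposition `s_i`
preserves the set of points above `j`, so `w` and `s_i w s_i` lie on the same side of the
projection, and any map with this property commutes with it. -/

namespace Finsupp

variable {α R : Type*} [Semiring R] {p : α → Prop} [DecidablePred p]

theorem map_filter_eq_filter_map (f : (α →₀ R) →ₗ[R] α →₀ R)
    (hf : ∀ w, ∀ w' ∈ (f (single w 1)).support, p w' ↔ p w) (v : α →₀ R) :
    f (v.filter p) = (f v).filter p := by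
  induction v using Finsupp.induction_linear with
  | zero => simp only [filter_zero, map_zero]
  | add v v' hv hv' => rw [filter_add, map_add, map_add, hv, hv', filter_add]
  | single w c =>
    have hsupp : ∀ w', f (single w c) w' ≠ 0 → (p w' ↔ p w) := fun w' hw' =>
      hf w w' (mem_support_iff.mpr (right_ne_zero_of_mul (by
        rwa [← smul_eq_mul, ← smul_apply, ← map_smul, smul_single_one])))
    by_cases hw : p w
    · rw [filter_single_of_pos _ hw, eq_comm, filter_eq_self_iff]
      exact fun w' hw' => (hsupp w' hw').mpr hw
    · rw [filter_single_of_neg _ hw, map_zero, eq_comm, filter_eq_zero_iff]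
      exact fun w' hpw' => not_not.mp fun hw' => hw ((hsupp w' hw').mp hpw')

end Finsupp

open Finsupp

section

variable {n : ℕ}

theorem PIS_apply (j : ℕ) (v : VIS n) :
    PIS n j v = v.filter fun w => ∀ a : Fin n, (w.1 a).isSome → j < (a : ℕ) := by
  induction v using Finsupp.induction_linear with
  | zero => simp only [map_zero, filter_zero]
  | add v v' hv hv' => rw [map_add, hv, hv', filter_add]
  | single w c =>
    rw [PIS, lift_apply, sum_single_index (by simp only [zero_smul])]
    split_ifs with hw
    · rw [filter_single_of_pos _ hw, smul_single_one]
    · rw [filter_single_of_neg _ hw, smul_zero]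

theorem conjPermIS_apply_isSome (π : Perm (Fin n)) (w : ISInv n) (a : Fin n) :
    ((conjPermIS π w).1 a).isSome = (w.1 (π.symm a)).isSome := by
  change ((((π.toPEquiv).symm.trans w.1).trans π.toPEquiv) a).isSome = _
  rw [← Equiv.toPEquiv_symm]
  cases h : w.1 (π.symm a) <;> simp [PEquiv.trans, Equiv.toPEquiv_apply, h]

theorem dom_gt_conjPermIS_iff {j : ℕ} {π : Perm (Fin n)} (hπ : ∀ a, j < (π a : ℕ) ↔ j < a)
    (w : ISInv n) :
    (∀ a : Fin n, ((conjPermIS π w).1 a).isSome → j < (a : ℕ)) ↔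
      ∀ a : Fin n, (w.1 a).isSome → j < (a : ℕ) := by
  simp only [conjPermIS_apply_isSome]
  rw [π.symm.forall_congr_left]
  simp only [Equiv.symm_symm, Equiv.symm_apply_apply, hπ]

theorem lt_swap_self_succ_iff {j i : ℕ} (hij : j < i) (hi : i + 1 < n) (a : Fin n) :
    j < (swap (⟨i, by omega⟩ : Fin n) ⟨i + 1, hi⟩ a : ℕ) ↔ j < a := by
  rw [swap_apply_def]
  split_ifs with h₁ h₂
  · simp only [h₁]; omega
  · simp only [h₂]; omega
  · rfl

theorem exists_TIS_single_eq_add (q : ℂ) {i : ℕ} (hi : i + 1 < n) (w : ISInv n) :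
    ∃ c d : ℂ, TIS n q i hi (single w 1) =
      c • single w 1 + d • single (conjPermIS (swap ⟨i, by omega⟩ ⟨i + 1, hi⟩) w) 1 := by
  rw [TIS, lift_apply, sum_single_index (by simp only [zero_smul]), one_smul]
  split_ifs
  exacts [⟨q, 0, by rw [zero_smul, add_zero]⟩, ⟨q - 1, q, add_comm _ _⟩,
    ⟨0, 1, by rw [zero_smul, zero_add, one_smul]⟩,
    ⟨-1, 0, by rw [zero_smul, add_zero, neg_one_smul]⟩,
    ⟨0, 1, by rw [zero_smul, zero_add, one_smul]⟩, ⟨q - 1, q, add_comm _ _⟩,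
    ⟨q, 0, by rw [zero_smul, add_zero]⟩]

theorem support_TIS_single_subset (q : ℂ) {i : ℕ} (hi : i + 1 < n) (w : ISInv n) :
    (TIS n q i hi (single w 1)).support ⊆
      {w, conjPermIS (swap ⟨i, by omega⟩ ⟨i + 1, hi⟩) w} := by
  obtain ⟨c, d, h⟩ := exists_TIS_single_eq_add q hi w
  rw [h]
  refine support_add.trans (Finset.union_subset ?_ ?_) <;>
    refine support_smul.trans (support_single_subset.trans ?_) <;> simp

end

theorem TIS_PIS_low_general (n : ℕ) (q : ℂ) (i j : ℕ)
    (hi : i + 1 < n) (hij : j < i) :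
    (TIS n q i hi : Module.End ℂ (VIS n)) * PIS n j =
      (PIS n j : Module.End ℂ (VIS n)) * TIS n q i hi := by
  refine LinearMap.ext fun v => ?_
  rw [Module.End.mul_apply, Module.End.mul_apply, PIS_apply, PIS_apply]
  refine map_filter_eq_filter_map _ (fun w w' hw' => ?_) v
  rcases Finset.mem_insert.mp (support_TIS_single_subset q hi w hw') with rfl | hw'
  · rfl
  · rw [Finset.mem_singleton.mp hw']
    exact dom_gt_conjPermIS_iff (lt_swap_self_succ_iff hij hi) w

/-- `T_i P_j = P_j T_i` for `j < i` (0-based indices: the paper's 1-based condition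
`1 ≤ j < i ≤ n − 1` reads `j < i`, `i + 1 < n`). -/
theorem TIS_PIS_low (n : ℕ) (hn : 2 ≤ n) (q : ℂ) (hq : q ≠ 0) (i j : ℕ)
    (hi : i + 1 < n) (hij : j < i) :
    (TIS n q i hi : Module.End ℂ (VIS n)) * PIS n j =
      (PIS n j : Module.End ℂ (VIS n)) * TIS n q i hi :=
  TIS_PIS_low_general n q i j hi hij
end
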